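/- Let N ≥ 2, α ∈ (0,1), β ∈ (α,1), λ* > 0, τ₁ := 1/(6λ*), τ ∈ (−τ₁,τ₁) with τ ≠ 0, and let u, v : ℝ^{N-1} → ℝ be of class C^{1,β} with ‖u − λ*‖_{C^{1,β}} < λ*/2. Then for every s ∈ ℝ^{N-1}, the directional derivative lim_{ς→0} ( 𝓗(τ, u + ςv)(s) − 𝓗(τ, u)(s) ) / ς exists and equals − ∑_{q∈ℤ, q≠0} ∫_{ℝ^{N-1}} (v(s) − v(s−t)) / ( |t|² + (u(s) − u(s−t) − q/τ)² )^{(N+α)/2} dt + ∑_{q∈ℤ, q≠0} ∫_{ℝ^{N-1}} (v(s) + v(s−t)) / ( |t|² + (u(s) + u(s−t) − q/τ)² )^{(N+α)/2} dt. -/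

import Mathlib

open MeasureTheory Real Filter Topology
open scoped Classical

noncomputable section

abbrev ES (m : ℕ) : Type := EuclideanSpace ℝ (Fin (m + 1))

/-- `u` is of class `C^{1,β}`. -/
def IsC1Beta {n : ℕ} (β : ℝ) (u : EuclideanSpace ℝ (Fin n) → ℝ) : Prop :=
  ContDiff ℝ 1 u ∧ (∃ C, ∀ x, |u x| ≤ C) ∧ (∃ C, ∀ x, ‖fderiv ℝ u x‖ ≤ C) ∧
    (∃ C, ∀ x y, ‖fderiv ℝ u x - fderiv ℝ u y‖ ≤ C * ‖x - y‖ ^ β)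

/-- The `β`-Hölder seminorm of the gradient of `u`. -/
def holderSemi {n : ℕ} (β : ℝ) (u : EuclideanSpace ℝ (Fin n) → ℝ) : ℝ :=
  ⨆ p : EuclideanSpace ℝ (Fin n) × EuclideanSpace ℝ (Fin n),
    if p.1 = p.2 then 0 else ‖fderiv ℝ u p.1 - fderiv ℝ u p.2‖ / ‖p.1 - p.2‖ ^ β

/-- The `C^{1,β}` norm: `sup |u| + sup |∇u| + [∇u]_β`. -/
def c1betaNorm {n : ℕ} (β : ℝ) (u : EuclideanSpace ℝ (Fin n) → ℝ) : ℝ :=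
  (⨆ x, |u x|) + (⨆ x, ‖fderiv ℝ u x‖) + holderSemi β u

/-- The operator `𝓗(τ,u)(s) = ∑_{q ≠ 0} ∫∫ u(s-t)/(|t|² + (u(s)-u(s-t)z-q/τ)²)^{(N+α)/2} dz dt`,
with `N = m + 2`. -/
def Hcal (m : ℕ) (α : ℝ) (τ : ℝ) (u : ES m → ℝ) (s : ES m) : ℝ :=
  ∑' q : {q : ℤ // q ≠ 0},
    ∫ t : ES m, ∫ z in Set.Ioo (-1 : ℝ) 1,
      u (s - t) / (‖t‖ ^ 2 + (u s - u (s - t) * z - (q : ℤ) / τ) ^ 2) ^ (((m : ℝ) + 2 + α) / 2)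

/-!
The substitution `r = u(s) - u(s-t) z - q/τ` turns the inner `z`-integral of `𝓗(τ, u)(s)` into
`∫ (|t|² + r²)^{-(N+α)/2} dr` over the interval with endpoints `u(s) ∓ u(s-t) - q/τ`. Hence its
derivative in the direction `v` is the difference of the values of this integrand at the two
endpoints, weighted by `v(s) ± v(s-t)`. For small `ς` we have `|u + ςv| ≤ 2λ*`, while
`|q/τ| > 6λ*|q|`, so every denominator is at least `(|t|² + (2λ*|q|)²)^{(N+α)/2}`. The `t`-integral
of that bound scales like `|q|^{-(1+α)}`, which is summable over `q`, so dominated convergence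
justifies differentiating under the `t`-integral and under the sum over `q`.
-/

open Set

theorem rpow_neg_norm_smul_sq_add_sq {E : Type*} [NormedAddCommGroup E] [NormedSpace ℝ E]
    (c p : ℝ) (x : E) :
    (‖c • x‖ ^ 2 + c ^ 2) ^ (-p) = (c ^ 2) ^ (-p) * (‖x‖ ^ 2 + 1) ^ (-p) := by
  rw [norm_smul, Real.norm_eq_abs, mul_pow, sq_abs, ← mul_add_one,
    Real.mul_rpow (sq_nonneg c) (by positivity)]

section Weight

variable {E : Type*} [NormedAddCommGroup E] [NormedSpace ℝ E] [FiniteDimensional ℝ E]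
  [MeasurableSpace E] [BorelSpace E] {μ : Measure E} [μ.IsAddHaarMeasure]

theorem integrable_rpow_neg_norm_sq_add_sq {c p : ℝ} (hc : c ≠ 0)
    (hp : (Module.finrank ℝ E : ℝ) < 2 * p) :
    Integrable (fun x : E => (‖x‖ ^ 2 + c ^ 2) ^ (-p)) μ := by
  have h := ((integrable_rpow_neg_one_add_norm_sq (μ := μ) hp).comp_smul
    (inv_ne_zero hc)).const_mul ((c ^ 2) ^ (-p))
  refine h.congr (Eventually.of_forall fun x => ?_)
  dsimp only
  rw [add_comm 1, neg_div, mul_div_cancel_left₀ p two_ne_zero, ← rpow_neg_norm_smul_sq_add_sq,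
    smul_inv_smul₀ hc]

theorem integral_rpow_neg_norm_sq_add_sq {c : ℝ} (hc : 0 < c) (p : ℝ) :
    ∫ x : E, (‖x‖ ^ 2 + c ^ 2) ^ (-p) ∂μ
      = c ^ ((Module.finrank ℝ E : ℝ) - 2 * p) * ∫ x : E, (‖x‖ ^ 2 + 1) ^ (-p) ∂μ := by
  have h := Measure.integral_comp_smul μ (fun x : E => (‖x‖ ^ 2 + c ^ 2) ^ (-p)) c
  simp only [rpow_neg_norm_smul_sq_add_sq, integral_const_mul, smul_eq_mul] at h
  have hd : 0 < c ^ Module.finrank ℝ E := pow_pos hc _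
  rw [abs_inv, abs_of_pos hd, eq_inv_mul_iff_mul_eq₀ hd.ne'] at h
  rw [← h, ← mul_assoc, Real.rpow_sub hc, Real.rpow_natCast, div_eq_mul_inv,
    Real.rpow_neg (sq_nonneg c), show (2 : ℝ) * p = ((2 : ℕ) : ℝ) * p by norm_num,
    Real.rpow_natCast_mul hc.le]

theorem integrable_of_abs_le_rpow_neg_norm_sq_add_sq {f : E → ℝ} {N c p : ℝ}
    (hf : AEStronglyMeasurable f μ) (hc : c ≠ 0) (hp : (Module.finrank ℝ E : ℝ) < 2 * p)
    (hfN : ∀ t, |f t| ≤ N * (‖t‖ ^ 2 + c ^ 2) ^ (-p)) : Integrable f μ :=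
  ((integrable_rpow_neg_norm_sq_add_sq hc hp).const_mul N).mono' hf (ae_of_all _ hfN)

theorem norm_integral_le_of_abs_le_rpow_neg_norm_sq_add_sq {f : E → ℝ} {N c p : ℝ} (hc : c ≠ 0)
    (hp : (Module.finrank ℝ E : ℝ) < 2 * p) (hfN : ∀ t, |f t| ≤ N * (‖t‖ ^ 2 + c ^ 2) ^ (-p)) :
    ‖∫ t, f t ∂μ‖ ≤ N * ∫ t, (‖t‖ ^ 2 + c ^ 2) ^ (-p) ∂μ := by
  rw [← integral_const_mul]
  exact norm_integral_le_of_norm_le ((integrable_rpow_neg_norm_sq_add_sq hc hp).const_mul N)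
    (ae_of_all _ hfN)

theorem summable_integral_rpow_neg_norm_sq_add_sq {a p : ℝ} (ha : 0 < a)
    (hp : (Module.finrank ℝ E : ℝ) + 1 < 2 * p) :
    Summable fun q : {q : ℤ // q ≠ 0} => ∫ x : E, (‖x‖ ^ 2 + (a * |(q : ℝ)|) ^ 2) ^ (-p) ∂μ := by
  have h := ((Real.summable_abs_int_rpow (b := 2 * p - Module.finrank ℝ E) (by linarith)).mul_left
    (a ^ ((Module.finrank ℝ E : ℝ) - 2 * p) * ∫ x : E, (‖x‖ ^ 2 + 1) ^ (-p) ∂μ)).comp_injective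
    (Subtype.val_injective (p := fun q : ℤ => q ≠ 0))
  refine h.congr fun q => ?_
  have hq : 0 < |(q : ℝ)| := abs_pos.2 (Int.cast_ne_zero.2 q.2)
  rw [Function.comp_apply, integral_rpow_neg_norm_sq_add_sq (mul_pos ha hq),
    Real.mul_rpow ha.le hq.le, neg_sub]
  ring

theorem summable_integral_of_abs_le_rpow_neg_norm_sq_add_sq {f : {q : ℤ // q ≠ 0} → E → ℝ}
    {N a p : ℝ} (ha : 0 < a) (hp : (Module.finrank ℝ E : ℝ) + 1 < 2 * p)
    (hf : ∀ q t, |f q t| ≤ N * (‖t‖ ^ 2 + (a * |(q : ℝ)|) ^ 2) ^ (-p)) :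
    Summable fun q => ∫ t, f q t ∂μ :=
  ((summable_integral_rpow_neg_norm_sq_add_sq ha hp).mul_left N).of_norm_bounded fun q =>
    norm_integral_le_of_abs_le_rpow_neg_norm_sq_add_sq
      (mul_pos ha (abs_pos.2 (Int.cast_ne_zero.2 q.2))).ne' (by linarith) (hf q)

end Weight

theorem integral_Ioo_mul_comp_sub_mul (f : ℝ → ℝ) (x y : ℝ) :
    ∫ z in Ioo (-1 : ℝ) 1, y * f (x - y * z) = ∫ r in x - y..x + y, f r := by
  rw [integral_const_mul, ← integral_Ioc_eq_integral_Ioo,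
    ← intervalIntegral.integral_of_le (by norm_num), intervalIntegral.mul_integral_comp_sub_mul]
  ring_nf

theorem hasDerivAt_intervalIntegral_comp {f : ℝ → ℝ} (hf : Continuous f) {l h : ℝ → ℝ}
    {l' h' x : ℝ} (hl : HasDerivAt l l' x) (hh : HasDerivAt h h' x) :
    HasDerivAt (fun y => ∫ r in l y..h y, f r) (f (h x) * h' - f (l x) * l') x := by
  have hF (y : ℝ) : HasDerivAt (fun b => ∫ r in (0 : ℝ)..b, f r) (f y) y :=
    (hf.integral_hasStrictDerivAt 0 y).hasDerivAt
  refine (((hF (h x)).comp x hh).sub ((hF (l x)).comp x hl)).congr_of_eventuallyEq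
    (Eventually.of_forall fun y => ?_)
  exact (intervalIntegral.integral_interval_sub_left (hf.intervalIntegrable _ _)
    (hf.intervalIntegrable _ _)).symm

theorem hasDerivAt_integral_Ioo_div_rpow {T : ℝ} (hT : 0 < T) (p a b c d k σ : ℝ) :
    HasDerivAt
      (fun ς => ∫ z in Ioo (-1 : ℝ) 1,
        (b + ς * d) / (T + (a + ς * c - (b + ς * d) * z - k) ^ 2) ^ p)
      ((c + d) / (T + (a + σ * c + (b + σ * d) - k) ^ 2) ^ p
        - (c - d) / (T + (a + σ * c - (b + σ * d) - k) ^ 2) ^ p) σ := by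
  set f : ℝ → ℝ := fun r => 1 / (T + r ^ 2) ^ p
  have hpos (r : ℝ) : 0 < T + r ^ 2 := by positivity
  have hf : Continuous f := continuous_const.div
    ((continuous_const.add (continuous_pow 2)).rpow_const fun r => Or.inl (hpos r).ne')
    fun r => (Real.rpow_pos_of_pos (hpos r) p).ne'
  have hsub : ∀ ς, (∫ z in Ioo (-1 : ℝ) 1,
      (b + ς * d) / (T + (a + ς * c - (b + ς * d) * z - k) ^ 2) ^ p)
      = ∫ r in a - k - b + ς * (c - d)..a - k + b + ς * (c + d), f r := by
    intro ς
    convert integral_Ioo_mul_comp_sub_mul f (a + ς * c - k) (b + ς * d) using 1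
    · congr 1 with z
      simp only [f]
      ring_nf
    · ring_nf
  simp_rw [hsub]
  convert hasDerivAt_intervalIntegral_comp hf ((hasDerivAt_mul_const (c - d)).const_add _)
    ((hasDerivAt_mul_const (c + d)).const_add _) using 1
  simp only [f]
  ring_nf

theorem le_abs_sub_mul_sub {B c k x y z : ℝ} (hx : |x| ≤ B) (hy : |y| ≤ B) (hz : |z| ≤ 1)
    (hk : 2 * B + c ≤ |k|) : c ≤ |x - y * z - k| := by
  have hyz : |y * z| ≤ B := by
    rw [abs_mul]; nlinarith [abs_nonneg y, abs_nonneg z]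
  have h1 := abs_sub_abs_le_abs_sub k (x - y * z)
  have h2 := abs_sub x (y * z)
  rw [abs_sub_comm k] at h1
  linarith

theorem abs_div_rpow_le {n N T X c p : ℝ} (hn : |n| ≤ N) (hT : 0 ≤ T) (hc : 0 < c)
    (hX : c ≤ |X|) (hp : 0 ≤ p) : |n / (T + X ^ 2) ^ p| ≤ N * (T + c ^ 2) ^ (-p) := by
  have h0 : 0 < T + c ^ 2 := by positivity
  have hle : T + c ^ 2 ≤ T + X ^ 2 := by
    rw [← sq_abs X]; gcongr
  rw [abs_div, abs_of_pos (Real.rpow_pos_of_pos (h0.trans_le hle) p), Real.rpow_neg h0.le,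
    ← div_eq_mul_inv]
  exact div_le_div₀ ((abs_nonneg n).trans hn) hn (Real.rpow_pos_of_pos h0 p)
    (Real.rpow_le_rpow h0.le hle hp)

section Kernel

variable {E : Type*} [NormedAddCommGroup E]

def kernelSlice (w : E → ℝ) (s : E) (k p : ℝ) (t : E) : ℝ :=
  ∫ z in Ioo (-1 : ℝ) 1, w (s - t) / (‖t‖ ^ 2 + (w s - w (s - t) * z - k) ^ 2) ^ p

def kernelSliceDeriv (w v : E → ℝ) (s : E) (k p : ℝ) (t : E) : ℝ :=
  (v s + v (s - t)) / (‖t‖ ^ 2 + (w s + w (s - t) - k) ^ 2) ^ p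
    - (v s - v (s - t)) / (‖t‖ ^ 2 + (w s - w (s - t) - k) ^ 2) ^ p

variable {w v : E → ℝ} {s : E} {k p B c M : ℝ}

theorem abs_kernelSlice_le (hw : ∀ x, |w x| ≤ B) (hc : 0 < c) (hk : 2 * B + c ≤ |k|)
    (hp : 0 ≤ p) (t : E) : |kernelSlice w s k p t| ≤ 2 * B * (‖t‖ ^ 2 + c ^ 2) ^ (-p) := by
  have hbound (z : ℝ) (hz : z ∈ Ioo (-1 : ℝ) 1) :
      ‖w (s - t) / (‖t‖ ^ 2 + (w s - w (s - t) * z - k) ^ 2) ^ p‖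
        ≤ B * (‖t‖ ^ 2 + c ^ 2) ^ (-p) :=
    abs_div_rpow_le (hw (s - t)) (sq_nonneg ‖t‖) hc
      (le_abs_sub_mul_sub (hw s) (hw (s - t)) (abs_le.2 ⟨hz.1.le, hz.2.le⟩) hk) hp
  have h := norm_setIntegral_le_of_norm_le_const (μ := volume) measure_Ioo_lt_top hbound
  rw [Real.volume_real_Ioo_of_le (by norm_num), Real.norm_eq_abs] at h
  unfold kernelSlice
  linarith

theorem abs_add_div_rpow_le (hw : ∀ x, |w x| ≤ B) (hv : ∀ x, |v x| ≤ M) (hc : 0 < c)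
    (hk : 2 * B + c ≤ |k|) (hp : 0 ≤ p) (t : E) :
    |(v s + v (s - t)) / (‖t‖ ^ 2 + (w s + w (s - t) - k) ^ 2) ^ p|
      ≤ 2 * M * (‖t‖ ^ 2 + c ^ 2) ^ (-p) := by
  refine abs_div_rpow_le ?_ (sq_nonneg ‖t‖) hc ?_ hp
  · linarith [abs_add_le (v s) (v (s - t)), hv s, hv (s - t)]
  · simpa using le_abs_sub_mul_sub (hw s) (hw (s - t)) (z := -1) (by norm_num) hk

theorem abs_sub_div_rpow_le (hw : ∀ x, |w x| ≤ B) (hv : ∀ x, |v x| ≤ M) (hc : 0 < c)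
    (hk : 2 * B + c ≤ |k|) (hp : 0 ≤ p) (t : E) :
    |(v s - v (s - t)) / (‖t‖ ^ 2 + (w s - w (s - t) - k) ^ 2) ^ p|
      ≤ 2 * M * (‖t‖ ^ 2 + c ^ 2) ^ (-p) := by
  refine abs_div_rpow_le ?_ (sq_nonneg ‖t‖) hc ?_ hp
  · linarith [abs_sub (v s) (v (s - t)), hv s, hv (s - t)]
  · simpa using le_abs_sub_mul_sub (hw s) (hw (s - t)) (z := 1) (by norm_num) hk

theorem abs_kernelSliceDeriv_le (hw : ∀ x, |w x| ≤ B) (hv : ∀ x, |v x| ≤ M) (hc : 0 < c)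
    (hk : 2 * B + c ≤ |k|) (hp : 0 ≤ p) (t : E) :
    |kernelSliceDeriv w v s k p t| ≤ 4 * M * (‖t‖ ^ 2 + c ^ 2) ^ (-p) := by
  have := abs_sub _ _ |>.trans (add_le_add (abs_add_div_rpow_le (s := s) hw hv hc hk hp t)
    (abs_sub_div_rpow_le (s := s) hw hv hc hk hp t))
  unfold kernelSliceDeriv
  linarith

variable [MeasurableSpace E] [BorelSpace E]

theorem stronglyMeasurable_kernelSlice (hw : Measurable w) :
    StronglyMeasurable (kernelSlice w s k p) := by
  have : Measurable fun x : E × ℝ =>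
      w (s - x.1) / (‖x.1‖ ^ 2 + (w s - w (s - x.1) * x.2 - k) ^ 2) ^ p := by
    fun_prop
  exact this.stronglyMeasurable.integral_prod_right'

end Kernel

section Perturbation

variable {E : Type*} [NormedAddCommGroup E] [NormedSpace ℝ E] [FiniteDimensional ℝ E]
  [MeasurableSpace E] [BorelSpace E] {μ : Measure E} [μ.IsAddHaarMeasure]
  {u v : E → ℝ} {s : E} {p B M ε a : ℝ} {κ : ℤ → ℝ}

theorem tsum_integral_kernelSliceDeriv (hu : Measurable u) (hv : Measurable v)
    (hM : ∀ x, |v x| ≤ M) (hB : ∀ x, |u x| ≤ B) (ha : 0 < a)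
    (hκ : ∀ q : ℤ, q ≠ 0 → 2 * B + a * |(q : ℝ)| ≤ |κ q|)
    (hp : (Module.finrank ℝ E : ℝ) + 1 < 2 * p) :
    ∑' q : {q : ℤ // q ≠ 0}, ∫ t, kernelSliceDeriv u v s (κ q) p t ∂μ
      = -(∑' q : {q : ℤ // q ≠ 0},
            ∫ t, (v s - v (s - t)) / (‖t‖ ^ 2 + (u s - u (s - t) - κ q) ^ 2) ^ p ∂μ)
        + ∑' q : {q : ℤ // q ≠ 0},
            ∫ t, (v s + v (s - t)) / (‖t‖ ^ 2 + (u s + u (s - t) - κ q) ^ 2) ^ p ∂μ := by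
  have hc (q : {q : ℤ // q ≠ 0}) : 0 < a * |(q : ℝ)| :=
    mul_pos ha (abs_pos.2 (Int.cast_ne_zero.2 q.2))
  have hp' : (Module.finrank ℝ E : ℝ) < 2 * p := by linarith
  have hp0 : 0 ≤ p := by linarith [(Module.finrank ℝ E).cast_nonneg (α := ℝ)]
  have hplus (q : {q : ℤ // q ≠ 0}) := abs_add_div_rpow_le (s := s) hB hM (hc q) (hκ q q.2) hp0
  have hminus (q : {q : ℤ // q ≠ 0}) := abs_sub_div_rpow_le (s := s) hB hM (hc q) (hκ q q.2) hp0
  rw [neg_add_eq_sub, ← (summable_integral_of_abs_le_rpow_neg_norm_sq_add_sq (μ := μ) ha hp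
    hplus).tsum_sub (summable_integral_of_abs_le_rpow_neg_norm_sq_add_sq ha hp hminus)]
  refine tsum_congr fun q => integral_sub ?_ ?_
  · exact integrable_of_abs_le_rpow_neg_norm_sq_add_sq
      (Measurable.aestronglyMeasurable (by fun_prop)) (hc q).ne' hp' (hplus q)
  · exact integrable_of_abs_le_rpow_neg_norm_sq_add_sq
      (Measurable.aestronglyMeasurable (by fun_prop)) (hc q).ne' hp' (hminus q)

variable [Nontrivial E]

theorem hasDerivAt_integral_kernelSlice {k c : ℝ} (hu : Measurable u) (hv : Measurable v)
    (hM : ∀ x, |v x| ≤ M) (hB : ∀ ς ∈ Metric.ball (0 : ℝ) ε, ∀ x, |u x + ς * v x| ≤ B)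
    (hc : 0 < c) (hk : 2 * B + c ≤ |k|) (hp : (Module.finrank ℝ E : ℝ) < 2 * p) {σ : ℝ}
    (hσ : σ ∈ Metric.ball (0 : ℝ) ε) :
    HasDerivAt (fun ς => ∫ t, kernelSlice (fun x => u x + ς * v x) s k p t ∂μ)
      (∫ t, kernelSliceDeriv (fun x => u x + σ * v x) v s k p t ∂μ) σ := by
  have hp0 : 0 ≤ p := by linarith [(Module.finrank ℝ E).cast_nonneg (α := ℝ)]
  have hmeas : Measurable (kernelSliceDeriv (fun x => u x + σ * v x) v s k p) := by
    unfold kernelSliceDeriv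
    fun_prop
  refine (hasDerivAt_integral_of_dominated_loc_of_deriv_le (Metric.isOpen_ball.mem_nhds hσ)
    (bound := fun t => 4 * M * (‖t‖ ^ 2 + c ^ 2) ^ (-p)) ?_ ?_ hmeas.aestronglyMeasurable
    (ae_of_all _ fun t ς hς =>
      (Real.norm_eq_abs _).trans_le (abs_kernelSliceDeriv_le (hB ς hς) hM hc hk hp0 t))
    ((integrable_rpow_neg_norm_sq_add_sq hc.ne' hp).const_mul _) ?_).2
  · exact Eventually.of_forall fun ς =>
      (stronglyMeasurable_kernelSlice (hu.add (measurable_const.mul hv))).aestronglyMeasurable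
  · exact integrable_of_abs_le_rpow_neg_norm_sq_add_sq
      (stronglyMeasurable_kernelSlice (hu.add (measurable_const.mul hv))).aestronglyMeasurable
      hc.ne' hp (abs_kernelSlice_le (hB σ hσ) hc hk hp0)
  · filter_upwards [μ.ae_ne 0] with t ht ς _
    exact hasDerivAt_integral_Ioo_div_rpow (pow_pos (norm_pos_iff.2 ht) 2) p (u s) (u (s - t))
      (v s) (v (s - t)) k ς

theorem hasDerivAt_tsum_integral_kernelSlice (hu : Measurable u) (hv : Measurable v)
    (hM : ∀ x, |v x| ≤ M) (hε : 0 < ε)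
    (hB : ∀ ς ∈ Metric.ball (0 : ℝ) ε, ∀ x, |u x + ς * v x| ≤ B) (ha : 0 < a)
    (hκ : ∀ q : ℤ, q ≠ 0 → 2 * B + a * |(q : ℝ)| ≤ |κ q|)
    (hp : (Module.finrank ℝ E : ℝ) + 1 < 2 * p) :
    HasDerivAt
      (fun ς => ∑' q : {q : ℤ // q ≠ 0}, ∫ t, kernelSlice (fun x => u x + ς * v x) s (κ q) p t ∂μ)
      (∑' q : {q : ℤ // q ≠ 0}, ∫ t, kernelSliceDeriv u v s (κ q) p t ∂μ) 0 := by
  have hc (q : {q : ℤ // q ≠ 0}) : 0 < a * |(q : ℝ)| :=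
    mul_pos ha (abs_pos.2 (Int.cast_ne_zero.2 q.2))
  have hp' : (Module.finrank ℝ E : ℝ) < 2 * p := by linarith
  have hp0 : 0 ≤ p := by linarith [(Module.finrank ℝ E).cast_nonneg (α := ℝ)]
  have hW := summable_integral_rpow_neg_norm_sq_add_sq (μ := μ) ha hp
  have h0 := Metric.mem_ball_self (x := (0 : ℝ)) hε
  have h := hasDerivAt_tsum_of_isPreconnected (hW.mul_left (4 * M)) Metric.isOpen_ball
    (convex_ball 0 ε).isPreconnected
    (fun q σ hσ => hasDerivAt_integral_kernelSlice (s := s) hu hv hM hB (hc q) (hκ q q.2) hp' hσ)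
    (fun q σ hσ => norm_integral_le_of_abs_le_rpow_neg_norm_sq_add_sq (hc q).ne' hp'
      (abs_kernelSliceDeriv_le (hB σ hσ) hM (hc q) (hκ q q.2) hp0))
    h0 (summable_integral_of_abs_le_rpow_neg_norm_sq_add_sq ha hp fun q =>
      abs_kernelSlice_le (hB 0 h0) (hc q) (hκ q q.2) hp0) h0
  simpa only [zero_mul, add_zero] using h

end Perturbation

theorem abs_le_c1betaNorm {n : ℕ} {β : ℝ} {w : EuclideanSpace ℝ (Fin n) → ℝ}
    (hw : ∃ C, ∀ x, |w x| ≤ C) (x : EuclideanSpace ℝ (Fin n)) : |w x| ≤ c1betaNorm β w := by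
  obtain ⟨C, hC⟩ := hw
  have hsup : |w x| ≤ ⨆ y, |w y| := le_ciSup ⟨C, by rintro _ ⟨y, rfl⟩; exact hC y⟩ x
  have hderiv : 0 ≤ ⨆ y, ‖fderiv ℝ w y‖ := Real.iSup_nonneg fun y => norm_nonneg _
  have hholder : 0 ≤ holderSemi β w := Real.iSup_nonneg fun _ => by split_ifs <;> positivity
  unfold c1betaNorm
  linarith

theorem abs_le_of_c1betaNorm_sub_lt {n : ℕ} {β L : ℝ} {u : EuclideanSpace ℝ (Fin n) → ℝ}
    (hu : ∃ C, ∀ x, |u x| ≤ C) (hL : 0 < L) (h : c1betaNorm β (fun x => u x - L) < L / 2)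
    (x : EuclideanSpace ℝ (Fin n)) : |u x| ≤ 3 / 2 * L := by
  obtain ⟨C, hC⟩ := hu
  have := abs_le_c1betaNorm (β := β) (w := fun y => u y - L)
    ⟨C + L, fun y => (abs_sub _ _).trans (by rw [abs_of_pos hL]; linarith [hC y])⟩ x
  linarith [abs_sub_abs_le_abs_sub (u x) L, abs_of_pos hL]

theorem abs_add_mul_le_of_mem_ball {E : Type*} {u v : E → ℝ} {L M ς : ℝ}
    (hu : ∀ x, |u x| ≤ 3 / 2 * L) (hv : ∀ x, |v x| ≤ M) (hM : 0 ≤ M)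
    (hς : ς ∈ Metric.ball (0 : ℝ) (L / (2 * (M + 1)))) (x : E) : |u x + ς * v x| ≤ 2 * L := by
  rw [mem_ball_zero_iff, Real.norm_eq_abs, lt_div_iff₀ (by positivity)] at hς
  have := abs_add_le (u x) (ς * v x)
  rw [abs_mul] at this
  nlinarith [hu x, hv x, abs_nonneg ς, abs_nonneg (v x)]

theorem two_mul_add_le_abs_int_div {L τ : ℝ} {q : ℤ} (hL : 0 < L) (hτ : τ ≠ 0)
    (hττ : |τ| < 1 / (6 * L)) (hq : q ≠ 0) :
    2 * (2 * L) + 2 * L * |(q : ℝ)| ≤ |(q : ℝ) / τ| := by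
  have hq1 : (1 : ℝ) ≤ |(q : ℝ)| := by exact_mod_cast Int.one_le_abs hq
  rw [lt_div_iff₀ (by positivity)] at hττ
  rw [abs_div, le_div_iff₀ (abs_pos.2 hτ)]
  nlinarith

theorem Hcal_eq_tsum_integral_kernelSlice (m : ℕ) (α τ : ℝ) (w : ES m → ℝ) (s : ES m) :
    Hcal m α τ w s = ∑' q : {q : ℤ // q ≠ 0},
      ∫ t, kernelSlice w s ((q : ℤ) / τ) (((m : ℝ) + 2 + α) / 2) t :=
  rfl

theorem statement_15_general (m : ℕ) (α β lamStar τ : ℝ) (hα : α ∈ Set.Ioo (0 : ℝ) 1)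
    (hl : 0 < lamStar) (hτ : τ ≠ 0) (hττ : |τ| < 1 / (6 * lamStar))
    (u v : ES m → ℝ) (hu : IsC1Beta β u) (hv : IsC1Beta β v)
    (hunear : c1betaNorm β (fun x => u x - lamStar) < lamStar / 2) (s : ES m) :
    Tendsto
      (fun ς : ℝ => (Hcal m α τ (fun x => u x + ς * v x) s - Hcal m α τ u s) / ς)
      (𝓝[≠] (0 : ℝ))
      (𝓝 (-(∑' q : {q : ℤ // q ≠ 0},
            ∫ t : ES m, (v s - v (s - t)) /
              (‖t‖ ^ 2 + (u s - u (s - t) - (q : ℤ) / τ) ^ 2) ^ (((m : ℝ) + 2 + α) / 2)) +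
          ∑' q : {q : ℤ // q ≠ 0},
            ∫ t : ES m, (v s + v (s - t)) /
              (‖t‖ ^ 2 + (u s + u (s - t) - (q : ℤ) / τ) ^ 2) ^ (((m : ℝ) + 2 + α) / 2))) := by
  obtain ⟨M, hM⟩ := hv.2.1
  have hM0 : 0 ≤ M := (abs_nonneg _).trans (hM 0)
  have hu_le := abs_le_of_c1betaNorm_sub_lt hu.2.1 hl hunear
  have hp : (Module.finrank ℝ (ES m) : ℝ) + 1 < 2 * (((m : ℝ) + 2 + α) / 2) := by
    rw [finrank_euclideanSpace_fin]
    push_cast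
    linarith [hα.1]
  have hκ (q : ℤ) (hq : q ≠ 0) := two_mul_add_le_abs_int_div hl hτ hττ hq
  have h := hasDerivAt_tsum_integral_kernelSlice (μ := volume) (s := s)
    (κ := fun q : ℤ => (q : ℝ) / τ) hu.1.continuous.measurable hv.1.continuous.measurable hM
    (by positivity) (fun ς hς => abs_add_mul_le_of_mem_ball hu_le hM hM0 hς) (by positivity) hκ hp
  rw [tsum_integral_kernelSliceDeriv hu.1.continuous.measurable hv.1.continuous.measurable hM
    (fun x => (hu_le x).trans (by linarith)) (by positivity) hκ hp] at h
  refine (hasDerivAt_iff_tendsto_slope.1 h).congr fun ς => ?_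
  rw [slope_def_field, sub_zero, Hcal_eq_tsum_integral_kernelSlice,
    Hcal_eq_tsum_integral_kernelSlice]
  simp only [zero_mul, add_zero]

/-- the directional derivative of `u ↦ 𝓗(τ,u)(s)` in the direction `v` exists
and is given by the explicit formula.  Here `N = m + 2 ≥ 2` and `τ₁ = 1/(6λ*)`. -/
theorem statement_15 (m : ℕ) (α β lamStar τ : ℝ) (hα : α ∈ Set.Ioo (0 : ℝ) 1)
    (hβ : β ∈ Set.Ioo α 1) (hl : 0 < lamStar) (hτ : τ ≠ 0) (hττ : |τ| < 1 / (6 * lamStar))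
    (u v : ES m → ℝ) (hu : IsC1Beta β u) (hv : IsC1Beta β v)
    (hunear : c1betaNorm β (fun x => u x - lamStar) < lamStar / 2) (s : ES m) :
    Tendsto
      (fun ς : ℝ => (Hcal m α τ (fun x => u x + ς * v x) s - Hcal m α τ u s) / ς)
      (𝓝[≠] (0 : ℝ))
      (𝓝 (-(∑' q : {q : ℤ // q ≠ 0},
            ∫ t : ES m, (v s - v (s - t)) /
              (‖t‖ ^ 2 + (u s - u (s - t) - (q : ℤ) / τ) ^ 2) ^ (((m : ℝ) + 2 + α) / 2)) +
          ∑' q : {q : ℤ // q ≠ 0},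
            ∫ t : ES m, (v s + v (s - t)) /
              (‖t‖ ^ 2 + (u s + u (s - t) - (q : ℤ) / τ) ^ 2) ^ (((m : ℝ) + 2 + α) / 2))) :=
  statement_15_general m α β lamStar τ hα hl hτ hττ u v hu hv hunear s
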